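/- (Case i = n+1) For 0 ≤ s < n, D_{n+1}(Q_{n,s}) = (-1)^n Q_{n,0} (−Q_{n,s-1}^p + Q_{n,n-1}^p Q_{n,s}), with the convention Q_{n,-1} = 0. -/

import Mathlib

open MvPolynomial Matrix Finset

/-- `[e₁,…,eₙ]`: the determinant of the matrix with `(k,j)`-entry `x_j^{p^{e_k}}`. -/
noncomputable def bracket (p n : ℕ) (e : Fin n → ℕ) : MvPolynomial (Fin n) (ZMod p) :=
  (Matrix.of fun k j : Fin n => (X j : MvPolynomial (Fin n) (ZMod p)) ^ p ^ (e k)).det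

/-- `L_n = [0,1,…,n-1]`. -/
noncomputable def Ln (p n : ℕ) : MvPolynomial (Fin n) (ZMod p) :=
  bracket p n (fun k => (k : ℕ))

/-- `L_{n,s} = [0,1,…,ŝ,…,n]` (entry `s` omitted from `0,…,n`). -/
noncomputable def Lns (p n s : ℕ) : MvPolynomial (Fin n) (ZMod p) :=
  bracket p n (fun k => if (k : ℕ) < s then (k : ℕ) else (k : ℕ) + 1)

/-- The `i`-th primitive Steenrod–Milnor operation, as the `F_p`-derivation
with `D_i(x_j) = x_j^{p^i}`. -/
noncomputable def Dop (p n i : ℕ) :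
    Derivation (ZMod p) (MvPolynomial (Fin n) (ZMod p)) (MvPolynomial (Fin n) (ZMod p)) :=
  MvPolynomial.mkDerivation (ZMod p) (fun j : Fin n => (X j) ^ p ^ i)

/-- The action of a matrix `g` on `P_n` by linear substitution of the variables. -/
noncomputable def act (p n : ℕ) (g : Matrix (Fin n) (Fin n) (ZMod p)) :
    MvPolynomial (Fin n) (ZMod p) →ₐ[ZMod p] MvPolynomial (Fin n) (ZMod p) :=
  MvPolynomial.aeval (fun j : Fin n => ∑ k : Fin n, g j k • (X k : MvPolynomial (Fin n) (ZMod p)))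

/-!
`D = D_{n+1}` is a derivation that kills `p`-th powers, so it kills `x_j^{p^e}` for `e ≥ 1` and
sends `x_j` to `x_j^{p^{n+1}}`. Expanding a bracket `[e₁,…,eₙ]` whose exponents are all positive
except one zero, `D` therefore just replaces that zero by `n+1`. For `s ≥ 1` this gives
`D L_{n,s} = [n+1,1,…,ŝ,…,n] = (-1)^{n-1} [1,…,s-1,s+1,…,n+1] = (-1)^{n-1} L_{n,s-1}^p`
(move the first row to the bottom), while `D L_{n,0} = D (L_n^p) = 0`. Now apply `D` to
`L_{n,s} = L_n Q_{n,s}` using the Leibniz rule, `L_n = L_{n,n}` and `L_n Q_{n,0} = L_n^p`, and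
cancel `L_n`, which is nonzero since its coefficient of `x_1^{p^0} ⋯ x_n^{p^{n-1}}` is `1`.
-/

namespace Derivation

section

variable {R A : Type*} [CommSemiring R] [CommSemiring A] [Algebra R A] (D : Derivation R A A)

theorem leibniz_prod {ι : Type*} [DecidableEq ι] (s : Finset ι) (f : ι → A) :
    D (∏ i ∈ s, f i) = ∑ i ∈ s, (∏ j ∈ s.erase i, f j) * D (f i) := by
  induction s using Finset.induction_on with
  | empty => simp
  | insert a s ha ih =>
    have herase (i) (hi : i ∈ s) :
        ∏ j ∈ (insert a s).erase i, f j = f a * ∏ j ∈ s.erase i, f j := by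
      rw [erase_insert_of_ne (ne_of_mem_of_not_mem hi ha).symm,
        prod_insert fun h => ha (mem_of_mem_erase h)]
    rw [sum_insert ha, erase_insert ha, sum_congr rfl fun i hi => by rw [herase i hi],
      prod_insert ha, leibniz, ih, smul_eq_mul, smul_eq_mul, mul_sum]
    simp only [mul_assoc]
    ring

theorem map_pow_char (p : ℕ) [CharP A p] (a : A) : D (a ^ p) = 0 := by
  rw [D.leibniz_pow, nsmul_eq_mul, CharP.cast_eq_zero, zero_mul]

end

theorem map_det_of_map_eq_zero {R A n : Type*} [CommSemiring R] [CommRing A] [Algebra R A]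
    [Fintype n] [DecidableEq n] (D : Derivation R A A) (M : Matrix n n A) (k₀ : n)
    (hM : ∀ k ≠ k₀, ∀ j, D (M k j) = 0) :
    D M.det = (M.updateRow k₀ fun j => D (M k₀ j)).det := by
  rw [← det_transpose M, ← det_transpose (updateRow _ _ _), det_apply, det_apply, map_sum]
  refine sum_congr rfl fun σ _ => ?_
  rw [Units.smul_def, Units.smul_def, map_zsmul, leibniz_prod,
    sum_eq_single k₀ (fun k _ hk => by rw [transpose_apply, hM k hk, mul_zero]) (by simp),
    ← mul_prod_erase univ _ (mem_univ k₀), mul_comm]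
  congr 2
  · simp
  · exact prod_congr rfl fun k hk => by simp [updateRow_ne (ne_of_mem_erase hk)]

end Derivation

section Bracket

variable (p n : ℕ)

theorem bracket_comp_perm (e : Fin n → ℕ) (σ : Equiv.Perm (Fin n)) :
    bracket p n (e ∘ σ) = (Equiv.Perm.sign σ : MvPolynomial (Fin n) (ZMod p)) * bracket p n e :=
  det_permute σ (of fun k j : Fin n => (X j : MvPolynomial (Fin n) (ZMod p)) ^ p ^ e k)

theorem bracket_add_one [Fact p.Prime] (e : Fin n → ℕ) :
    bracket p n (fun k => e k + 1) = bracket p n e ^ p := by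
  rw [bracket, bracket, ← frobenius_def, RingHom.map_det]
  congr 1
  ext k j
  simp [frobenius_def, ← pow_mul, pow_succ]

theorem Dop_X (i : ℕ) (j : Fin n) : Dop p n i (X j) = X j ^ p ^ i :=
  mkDerivation_X _ _ _

theorem Dop_X_pow_pow_succ [Fact p.Prime] (i e : ℕ) (j : Fin n) :
    Dop p n i (X j ^ p ^ (e + 1)) = 0 := by
  rw [pow_succ, pow_mul, Derivation.map_pow_char]

theorem Dop_bracket [Fact p.Prime] (i : ℕ) (e : Fin n → ℕ) (k₀ : Fin n) (h₀ : e k₀ = 0)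
    (hpos : ∀ k ≠ k₀, 0 < e k) :
    Dop p n i (bracket p n e) = bracket p n (Function.update e k₀ i) := by
  rw [bracket, Derivation.map_det_of_map_eq_zero _ _ k₀ fun k hk j => ?_, bracket]
  · congr
    ext k j
    rcases eq_or_ne k k₀ with rfl | hk
    · simp [h₀, Dop_X]
    · simp [hk]
  · obtain ⟨d, hd⟩ := Nat.exists_eq_add_one_of_ne_zero (hpos k hk).ne'
    rw [of_apply, hd, Dop_X_pow_pow_succ]

theorem Ln_eq_Lns : Ln p n = Lns p n n := by
  simp [Ln, Lns]

theorem Lns_zero [Fact p.Prime] : Lns p n 0 = Ln p n ^ p := by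
  simpa [Lns, Ln] using bracket_add_one p n _

theorem Dop_Lns_succ [Fact p.Prime] {s : ℕ} (hs : s < n) :
    Dop p n (n + 1) (Lns p n (s + 1)) = -(-1) ^ n * Lns p n s ^ p := by
  obtain ⟨m, rfl⟩ : ∃ m, n = m + 1 := ⟨n - 1, by omega⟩
  have hrot :
      Function.update (fun k : Fin (m + 1) => if (k : ℕ) < s + 1 then (k : ℕ) else k + 1)
        0 (m + 1 + 1) ∘ finRotate (m + 1) =
      fun k : Fin (m + 1) => (if (k : ℕ) < s then (k : ℕ) else k + 1) + 1 := by
    funext k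
    induction k using Fin.lastCases with
    | last => simp; omega
    | cast k =>
      rw [Function.comp_apply, Function.update_of_ne]
      · simp
        split_ifs <;> omega
      · simp [Fin.ext_iff]
  rw [Lns, Dop_bracket p _ _ _ 0 (by simp) fun k hk => ?_, Lns, ← bracket_add_one, ← hrot,
    bracket_comp_perm, sign_finRotate]
  · push_cast
    rw [← mul_assoc, pow_succ, mul_neg_one, neg_neg, ← pow_add, ← two_mul, pow_mul, neg_one_sq,
      one_pow, one_mul]
  · have : (k : ℕ) ≠ 0 := Fin.val_ne_zero_iff.mpr hk
    split_ifs <;> omega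

theorem coeff_Ln [Fact p.Prime] :
    coeff (Finsupp.indicator univ fun (i : Fin n) _ => p ^ (i : ℕ)) (Ln p n) = 1 := by
  have hexp (σ : Equiv.Perm (Fin n)) :
      (Finsupp.indicator univ fun (i : Fin n) _ => p ^ (i : ℕ)) =
        (Finsupp.indicator univ fun i _ => p ^ (σ i : ℕ)) ↔ σ = 1 := by
    simp [Finsupp.ext_iff, Equiv.ext_iff, Fin.ext_iff, eq_comm,
      (Nat.pow_right_injective (Fact.out : p.Prime).two_le).eq_iff]
  rw [Ln, bracket, det_apply, coeff_sum, sum_eq_single 1]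
  · simp [coeff_prod_X_pow]
  · intro σ _ hσ
    simp [coeff_prod_X_pow, hexp, hσ]
  · simp

theorem Ln_ne_zero [Fact p.Prime] : Ln p n ≠ 0 := fun h => by
  simpa [h] using coeff_Ln p n

end Bracket

theorem stmt11_general (p n : ℕ) [Fact p.Prime]
    (Q : ℤ → MvPolynomial (Fin n) (ZMod p))
    (hQneg : ∀ t : ℤ, t < 0 → Q t = 0)
    (hQ : ∀ s : ℕ, s < n → Lns p n s = Ln p n * Q s)
    (s : ℕ) (hs : s < n) :
    Dop p n (n + 1) (Q s) =
      (-1 : MvPolynomial (Fin n) (ZMod p)) ^ n * Q 0 *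
        (-(Q ((s : ℤ) - 1)) ^ p + (Q ((n : ℤ) - 1)) ^ p * Q s) := by
  have hQ₀ : Ln p n * Q 0 = Ln p n ^ p := by simpa [Lns_zero] using (hQ 0 (by omega)).symm
  have hD (t : ℕ) (ht : t ≤ n) :
      Dop p n (n + 1) (Lns p n t) = -(-1) ^ n * (Ln p n * Q (t - 1)) ^ p := by
    rcases t with _ | t
    · rw [Lns_zero, Derivation.map_pow_char, Nat.cast_zero, zero_sub, hQneg (-1) (by omega),
        mul_zero, zero_pow (Fact.out : p.Prime).ne_zero, mul_zero]
    · rw [Dop_Lns_succ p n ht, hQ t ht, Nat.cast_succ, add_sub_cancel_right]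
  have hDLn := hD n le_rfl
  rw [← Ln_eq_Lns] at hDLn
  have hLeibniz := (Dop p n (n + 1)).leibniz (Ln p n) (Q s)
  rw [← hQ s hs, hD s hs.le, hDLn, smul_eq_mul, smul_eq_mul, mul_pow, mul_pow, ← hQ₀] at hLeibniz
  apply mul_left_cancel₀ (Ln_ne_zero p n)
  linear_combination -hLeibniz

theorem stmt11 (p n : ℕ) [Fact p.Prime] (hn : 1 ≤ n)
    (Q : ℤ → MvPolynomial (Fin n) (ZMod p))
    (hQneg : ∀ t : ℤ, t < 0 → Q t = 0)
    (hQ : ∀ s : ℕ, s < n → Lns p n s = Ln p n * Q s)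
    (s : ℕ) (hs : s < n) :
    Dop p n (n + 1) (Q s) =
      (-1 : MvPolynomial (Fin n) (ZMod p)) ^ n * Q 0 *
        (-(Q ((s : ℤ) - 1)) ^ p + (Q ((n : ℤ) - 1)) ^ p * Q s) :=
  stmt11_general p n Q hQneg hQ s hs
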